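/- arXiv:0804.2018 — 2 statements merged into one kernel-verified Lean document; each statement's English description precedes it below -/
import Mathlib

section
/- For every integer n ≥ 3 and every real number θ, P_n(cos θ) = - sin θ · sin((n-1)θ). -/
open Finset Polynomial Real

noncomputable section

/-- Binomial coefficient `C(a, b)` for integer lower index, zero when `b < 0` or `b > a`. -/
def chooseZ (a : ℕ) (b : ℤ) : ℤ := if 0 ≤ b then (a.choose b.toNat : ℤ) else 0

/-- `f n k m p = ∑_{i=0}^{n} (-1)^i C(n,i) C(np+m-ip, n+k)`. -/
def f (n : ℕ) (k : ℤ) (m p : ℕ) : ℤ :=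
  ∑ i ∈ Finset.range (n + 1),
    (-1) ^ i * (n.choose i : ℤ) * chooseZ (n * p + m - i * p) ((n : ℤ) + k)

/-- The coefficients `c(n,k,m,p)`. -/
def c (n : ℕ) (k : ℤ) (m p : ℕ) : ℤ :=
  if 0 ≤ k ∧ k ≤ (n : ℤ) ∧ (n : ℤ) % 2 = k % 2 ∧ 2 * (m : ℤ) ≤ (n : ℤ) + k then
    (-1) ^ ((((n : ℤ) - k) / 2).toNat) *
      f ((((n : ℤ) + k - 2 * m) / 2).toNat) (((n : ℤ) - k) / 2) m p
  else 0

/-- The polynomial `P_{n,m,p}(x) = ∑_{k=0}^n c(n,k,m,p) x^k`, as a real polynomial. -/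
def P (n m p : ℕ) : Polynomial ℝ :=
  ∑ k ∈ Finset.range (n + 1), Polynomial.C ((c n (k : ℤ) m p : ℝ)) * Polynomial.X ^ k

/-! The coefficients of `P_{n,2,2}` are read off a generating polynomial: by the binomial theorem
`∑ i, (-1)^i C(N,i) (1+x)^(2N+2-2i) = (1+x)^2 ((1+x)^2 - 1)^N = x^N (1+x)^2 (x+2)^N`, so `f N K 2 2`
is the coefficient of `x^K` in `(1+x)^2 (x+2)^N`. Multiplying by `x + 2` gives a Pascal-type
recurrence for `f`, which becomes the Chebyshev recurrence `P_{n+2} = 2x P_{n+1} - P_n` for `n ≥ 3`.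
Together with the cases `n = 3, 4` this gives `P_n = (x^2 - 1) U_{n-2}`, and
`U_{n-2}(cos θ) sin θ = sin ((n-1)θ)`. -/

def fPoly (N : ℕ) : ℤ[X] := (X + 1) ^ 2 * (X + 2) ^ N

lemma chooseZ_eq_coeff (a : ℕ) {b : ℤ} (hb : 0 ≤ b) :
    chooseZ a b = ((X + 1 : ℤ[X]) ^ a).coeff b.toNat := by
  rw [chooseZ, if_pos hb, coeff_X_add_one_pow]

lemma sum_alternating_choose_X_add_one_pow (N : ℕ) :
    ∑ i ∈ range (N + 1), ((-1) ^ i * N.choose i : ℤ) • (X + 1 : ℤ[X]) ^ (N * 2 + 2 - i * 2) =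
      X ^ N * fPoly N := by
  have hpow : ∀ i ∈ range (N + 1),
      ((-1) ^ i * N.choose i : ℤ) • (X + 1 : ℤ[X]) ^ (N * 2 + 2 - i * 2) =
        (X + 1) ^ 2 * ((-1 : ℤ[X]) ^ i * ((X + 1) ^ 2) ^ (N - i) * (N.choose i : ℤ[X])) := by
    intro i hi
    rw [show N * 2 + 2 - i * 2 = 2 + 2 * (N - i) by rw [mem_range] at hi; omega,
      pow_add, pow_mul, zsmul_eq_mul]
    push_cast
    ring
  rw [sum_congr rfl hpow, ← mul_sum, ← add_pow,
    show (-1 : ℤ[X]) + (X + 1) ^ 2 = X * (X + 2) by ring, mul_pow, fPoly]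
  ring

lemma f_eq_ite_coeff (N : ℕ) (K : ℤ) :
    f N K 2 2 = if 0 ≤ K then (fPoly N).coeff K.toNat else 0 := by
  rcases lt_or_ge ((N : ℤ) + K) 0 with hNK | hNK
  · rw [if_neg (by omega), f]
    exact sum_eq_zero fun i _ ↦ by rw [chooseZ, if_neg (by omega), mul_zero]
  · have hcoeff : f N K 2 2 = (X ^ N * fPoly N).coeff ((N : ℤ) + K).toNat := by
      simp only [f, chooseZ_eq_coeff _ hNK, ← sum_alternating_choose_X_add_one_pow,
        finsetSum_coeff, coeff_smul, smul_eq_mul]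
    rw [hcoeff, coeff_X_pow_mul']
    split_ifs <;> first | omega | (congr 1; omega)

lemma f_natCast (N K : ℕ) : f N K 2 2 = (fPoly N).coeff K := by
  simp [f_eq_ite_coeff]

lemma f_of_neg (N : ℕ) {K : ℤ} (hK : K < 0) : f N K 2 2 = 0 := by
  simp [f_eq_ite_coeff, hK.not_ge]

lemma natDegree_fPoly_le (N : ℕ) : (fPoly N).natDegree ≤ N + 2 := by
  unfold fPoly
  compute_degree
  omega

lemma f_of_lt (N : ℕ) {K : ℤ} (hK : (N : ℤ) + 2 < K) : f N K 2 2 = 0 := by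
  rw [f_eq_ite_coeff, if_pos (by omega)]
  exact coeff_eq_zero_of_natDegree_lt ((natDegree_fPoly_le N).trans_lt (by omega))

lemma f_succ_succ (N : ℕ) (K : ℤ) :
    f (N + 1) (K + 1) 2 2 = 2 * f N (K + 1) 2 2 + f N K 2 2 := by
  rcases lt_or_ge K (-1) with hK | hK
  · simp [f_of_neg, show K + 1 < 0 by omega, show K < 0 by omega]
  obtain ⟨k, hk⟩ : ∃ k : ℕ, K + 1 = k := ⟨(K + 1).toNat, by omega⟩
  have hrec : fPoly (N + 1) = X * fPoly N + C 2 * fPoly N := by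
    simp only [fPoly, C_ofNat]
    ring
  rw [hk, f_natCast, f_natCast, hrec, coeff_add, coeff_C_mul]
  rcases k with _ | k
  · simp [f_of_neg N (show K < 0 by omega)]
  · rw [coeff_X_mul, show K = (k : ℤ) by push_cast at hk; omega, f_natCast]
    ring

lemma c_eq_f (N : ℕ) (K : ℤ) {n : ℕ} {k : ℤ} (hn : (n : ℤ) = N + K + 2) (hk : k = N - K + 2) :
    c n k 2 2 = (-1) ^ K.toNat * f N K 2 2 := by
  rcases lt_or_ge K 0 with hK | hK
  · rw [f_of_neg N hK, c, if_neg (by omega), mul_zero]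
  rcases lt_or_ge ((N : ℤ) + 2) K with hKN | hKN
  · rw [f_of_lt N hKN, c, if_neg (by omega), mul_zero]
  rw [c, if_pos (by push_cast; omega), show ((n : ℤ) - k) / 2 = K by omega,
    show ((n : ℤ) + k - 2 * (2 : ℕ)) / 2 = N by push_cast; omega, Int.toNat_natCast]

lemma c_add_two (n : ℕ) (hn : 3 ≤ n) (k : ℤ) :
    c (n + 2) k 2 2 = 2 * c (n + 1) (k - 1) 2 2 - c n k 2 2 := by
  by_cases hzero : (n : ℤ) % 2 ≠ k % 2 ∨ k < 0
  · simp only [c]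
    rw [if_neg (by push_cast; omega), if_neg (by push_cast; omega), if_neg (by omega)]
    ring
  obtain ⟨N, hN⟩ : ∃ N : ℕ, (n : ℤ) + k - 4 = 2 * N := ⟨((n + k - 4) / 2).toNat, by omega⟩
  obtain ⟨K, hK⟩ : ∃ K : ℤ, (n : ℤ) - k = 2 * K := ⟨(n - k) / 2, by omega⟩
  rw [c_eq_f (N + 1) (K + 1) (by push_cast; omega) (by push_cast; omega),
    c_eq_f N (K + 1) (by push_cast; omega) (by omega), c_eq_f N K (by omega) (by omega),
    f_succ_succ]
  rcases lt_or_ge K 0 with hKneg | hKnonneg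
  · rw [f_of_neg N hKneg, show (K + 1).toNat = K.toNat by omega]
    ring
  · rw [show (K + 1).toNat = K.toNat + 1 by omega, pow_succ]
    ring

lemma coeff_P (n m p k : ℕ) : (P n m p).coeff k = c n k m p := by
  simp only [P, finsetSum_coeff, coeff_C_mul_X_pow, sum_ite_eq, mem_range]
  split_ifs with hk
  · rfl
  · rw [c, if_neg (by omega), Int.cast_zero]

lemma P_add_two (n : ℕ) (hn : 3 ≤ n) :
    P (n + 2) 2 2 = 2 * X * P (n + 1) 2 2 - P n 2 2 := by
  ext k
  rw [coeff_sub, mul_assoc, ← C_ofNat, coeff_C_mul, coeff_P, coeff_P, c_add_two n hn]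
  rcases k with _ | k
  · rw [coeff_X_mul_zero, c, if_neg (by omega)]
    simp
  · rw [coeff_X_mul, coeff_P, Nat.cast_succ, add_sub_cancel_right]
    push_cast
    ring

lemma P_three : P 3 2 2 = (X ^ 2 - 1) * Chebyshev.U ℝ 1 := by
  simp [P, sum_range_succ, c, f, chooseZ, Nat.choose, map_ofNat, Chebyshev.U_one]
  ring

lemma P_four : P 4 2 2 = (X ^ 2 - 1) * Chebyshev.U ℝ 2 := by
  simp [P, sum_range_succ, c, f, chooseZ, Nat.choose, map_ofNat, Chebyshev.U_two]
  ring

lemma P_eq_mul_U : ∀ n : ℕ, P (n + 3) 2 2 = (X ^ 2 - 1) * Chebyshev.U ℝ (n + 1)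
  | 0 => P_three
  | 1 => P_four
  | n + 2 => by
    rw [P_add_two (n + 3) (by omega), P_eq_mul_U n, P_eq_mul_U (n + 1)]
    push_cast
    rw [show (n : ℤ) + 2 + 1 = n + 1 + 2 by ring, Chebyshev.U_add_two]
    ring

/-- For n ≥ 3 and every real θ, `P_n(cos θ) = - sin θ · sin((n-1)θ)`. -/
theorem statement2 (n : ℕ) (hn : 3 ≤ n) (θ : ℝ) :
    (P n 2 2).eval (Real.cos θ) = - (Real.sin θ * Real.sin (((n : ℝ) - 1) * θ)) := by
  obtain ⟨m, rfl⟩ := Nat.exists_eq_add_of_le' hn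
  have hU := Chebyshev.U_real_cos θ ((m : ℤ) + 1)
  rw [P_eq_mul_U, eval_mul, eval_sub, eval_pow, eval_X, eval_one, cos_sq']
  push_cast at hU ⊢
  rw [show ((m : ℝ) + 3 - 1) * θ = ((m : ℝ) + 1 + 1) * θ by ring, ← hU]
  ring
end
end

section
/- For all integers n ≥ 0 and 0 ≤ k ≤ n one has f(n,k,0,2) = Σ_{s=0}^{n-k} C(n,s) C(n-s,k). -/
open Finset Polynomial Real

noncomputable section

/-! By the binomial theorem, `f n k m p` is the coefficient of `x ^ (n + k)` in
`(1 + x) ^ m * ((1 + x) ^ p - 1) ^ n`. For `m = 0`, `p = 2` this polynomial is `x ^ n * (x + 2) ^ n`,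
so `f n k 0 2 = C(n,k) 2 ^ (n - k)`. The right-hand side has the same value by the trinomial
revision `C(n,s) C(n-s,k) = C(n,k) C(n-k,s)` and `∑ₛ C(n-k,s) = 2 ^ (n - k)`. -/

lemma chooseZ_natCast (a b : ℕ) : chooseZ a b = a.choose b := by
  simp [chooseZ]

lemma f_eq_coeff (n k m p : ℕ) :
    f n k m p = ((1 + X : ℤ[X]) ^ m * ((1 + X) ^ p - 1) ^ n).coeff (n + k) := by
  rw [← neg_add_eq_sub, add_pow (-1 : ℤ[X]), mul_sum, finsetSum_coeff, f]
  refine sum_congr rfl fun i hi => ?_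
  have hexp : n * p + m - i * p = m + p * (n - i) := by
    rw [Nat.mul_sub, Nat.mul_comm p n, Nat.mul_comm p i]
    have := Nat.mul_le_mul_right p (Nat.lt_succ_iff.mp (mem_range.mp hi))
    omega
  have hterm : (1 + X : ℤ[X]) ^ m * ((-1) ^ i * ((1 + X) ^ p) ^ (n - i) * (n.choose i : ℤ[X])) =
      C ((-1) ^ i * (n.choose i : ℤ)) * (1 + X) ^ (m + p * (n - i)) := by
    simp only [map_mul, map_pow, map_neg, map_one, map_natCast, pow_add, pow_mul]
    ring
  rw [hterm, coeff_C_mul, coeff_one_add_X_pow, hexp, ← Nat.cast_add, chooseZ_natCast]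

lemma f_zero_two (n k : ℕ) : f n k 0 2 = n.choose k * 2 ^ (n - k) := by
  have hpoly : (1 + X : ℤ[X]) ^ 0 * ((1 + X) ^ 2 - 1) ^ n = (X + C 2) ^ n * X ^ n := by
    rw [← mul_pow, C_ofNat]
    ring
  rw [f_eq_coeff, hpoly, add_comm n k, coeff_mul_X_pow, coeff_X_add_C_pow, mul_comm]

lemma choose_mul_choose_sub_comm (n s k : ℕ) :
    n.choose s * (n - s).choose k = n.choose k * (n - k).choose s := by
  have hs := Nat.choose_mul (n := n) (Nat.le_add_right s k)
  have hk := Nat.choose_mul (n := n) (Nat.le_add_left k s)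
  rw [Nat.add_sub_cancel_left] at hs
  rw [Nat.add_sub_cancel] at hk
  rw [← hs, ← hk, Nat.choose_symm_add]

lemma sum_range_choose_mul_choose_sub (n k : ℕ) :
    ∑ s ∈ range (n - k + 1), n.choose s * (n - s).choose k = n.choose k * 2 ^ (n - k) := by
  simp only [choose_mul_choose_sub_comm n _ k, ← mul_sum, Nat.sum_range_choose]

theorem statement15_general (n k : ℕ) :
    f n k 0 2 = ∑ s ∈ Finset.range (n - k + 1), (n.choose s : ℤ) * ((n - s).choose k : ℤ) := by
  rw [f_zero_two]
  exact_mod_cast (sum_range_choose_mul_choose_sub n k).symm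

/-- For 0 ≤ k ≤ n, `f(n,k,0,2) = ∑_{s=0}^{n-k} C(n,s) C(n-s,k)`. -/
theorem statement15 (n k : ℕ) (hk : k ≤ n) :
    f n k 0 2 = ∑ s ∈ Finset.range (n - k + 1), (n.choose s : ℤ) * ((n - s).choose k : ℤ) :=
  statement15_general n k
end
end
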